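/- Fix N ≥ 1, M > 0, c ≥ 0, k ≥ 0, ε ≥ 0. Let x₁,…,x_N : ℝ → ℝ be twice differentiable, set x₀(t) = x_{N+1}(t) = 0 for all t, write Δ⁻x_j = x_j − x_{j−1} and Δ⁺x_j = x_j − x_{j+1} (and similarly for velocities), and suppose that for every j = 1,…,N and every t: M·x_j''(t) + c·(Δ⁻x_j(t)·sgn(Δ⁻x_j(t)·Δ⁻x_j'(t)) + Δ⁺x_j(t)·sgn(Δ⁺x_j(t)·Δ⁺x_j'(t))) + k·(Δ⁻x_j(t) + Δ⁺x_j(t)) + ε·((Δ⁻x_j(t))³ + (Δ⁺x_j(t))³) = 0 (the unforced model II lattice). Then the total energy E(t) = Σ_{j=1}^{N} (M/2)·x_j'(t)² + Σ_{j=0}^{N} [(k/2)·(x_{j+1}(t) − x_j(t))² + (ε/4)·(x_{j+1}(t) − x_j(t))⁴] is nonincreasing in t; indeed E is differentiable with E'(t) = −c·Σ_{j=0}^{N} |(x_{j+1}(t) − x_j(t))·(x_{j+1}'(t) − x_j'(t))| ≤ 0, i.e. each bond dissipates energy at rate c·|Δx·Δẋ|. -/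

import Mathlib

/-!
Bond `j`, between sites `j` and `j + 1`, carries the tension
`F_j = c·Δx_j·sgn(Δx_j·Δẋ_j) + k·Δx_j + ε·Δx_j³`, and the equations of motion read
`M·ẍ_j = F_j − F_{j−1}`. Since the boundary velocities vanish, summation by parts turns the kinetic
power `Σ M·ẋ_j·ẍ_j` into `−Σ F_j·Δẋ_j`, while the potential power is `Σ (k·Δx_j + ε·Δx_j³)·Δẋ_j`.
Their sum is `−c·Σ Δx_j·Δẋ_j·sgn(Δx_j·Δẋ_j) = −c·Σ |Δx_j·Δẋ_j|`.
-/

open Finset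

lemma Real.self_mul_sign (r : ℝ) : r * Real.sign r = |r| := by
  rcases lt_trichotomy r 0 with h | rfl | h
  · rw [Real.sign_of_neg h, abs_of_neg h, mul_neg_one]
  · simp
  · rw [Real.sign_of_pos h, abs_of_pos h, mul_one]

lemma Finset.sum_range_mul_sub_eq {R : Type*} [CommRing R] (f g : ℕ → R) (N : ℕ) :
    ∑ j ∈ range (N + 1), f j * (g (j + 1) - g j)
      = ∑ j ∈ Icc 1 N, (f (j - 1) - f j) * g j + f N * g (N + 1) - f 0 * g 0 := by
  induction N with
  | zero =>
    simp only [zero_add, range_one, sum_singleton, Order.lt_one_iff, Icc_eq_empty_of_lt, sum_empty]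
    ring
  | succ n ih =>
    rw [sum_range_succ, ih, sum_Icc_succ_top (by omega), Nat.add_sub_cancel]
    ring

lemma HasDerivAt.const_mul_sq_div_two {f : ℝ → ℝ} {f' t : ℝ} (a : ℝ) (hf : HasDerivAt f f' t) :
    HasDerivAt (fun s => a / 2 * f s ^ 2) (a * f t * f') t := by
  refine ((hf.fun_pow 2).const_mul (a / 2)).congr_deriv ?_
  push_cast
  ring

lemma HasDerivAt.bondPotential {u : ℝ → ℝ} {u' t : ℝ} (k ε : ℝ) (hu : HasDerivAt u u' t) :
    HasDerivAt (fun s => k / 2 * u s ^ 2 + ε / 4 * u s ^ 4) ((k * u t + ε * u t ^ 3) * u') t := by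
  refine (((hu.fun_pow 2).const_mul (k / 2)).fun_add
    ((hu.fun_pow 4).const_mul (ε / 4))).congr_deriv ?_
  push_cast
  ring

noncomputable def bondForce (c k ε u v : ℝ) : ℝ :=
  c * (u * Real.sign (u * v)) + k * u + ε * u ^ 3

lemma bondForce_mul_rate (c k ε u v : ℝ) :
    bondForce c k ε u v * v = (k * u + ε * u ^ 3) * v + c * |u * v| := by
  rw [bondForce, ← Real.self_mul_sign]
  ring

section Lattice

variable (N : ℕ) (M c k ε : ℝ) (u v a : ℕ → ℝ)

noncomputable def latticeBondForce (j : ℕ) : ℝ :=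
  bondForce c k ε (u (j + 1) - u j) (v (j + 1) - v j)

lemma mul_accel_eq_latticeBondForce_sub {j : ℕ} (hj : 1 ≤ j)
    (heq : M * a j
        + c * ((u j - u (j - 1)) * Real.sign ((u j - u (j - 1)) * (v j - v (j - 1)))
              + (u j - u (j + 1)) * Real.sign ((u j - u (j + 1)) * (v j - v (j + 1))))
        + k * ((u j - u (j - 1)) + (u j - u (j + 1)))
        + ε * ((u j - u (j - 1)) ^ 3 + (u j - u (j + 1)) ^ 3) = 0) :
    M * a j = latticeBondForce c k ε u v j - latticeBondForce c k ε u v (j - 1) := by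
  obtain ⟨i, rfl⟩ : ∃ i, j = i + 1 := ⟨j - 1, by omega⟩
  have hrate : (u (i + 1) - u (i + 1 + 1)) * (v (i + 1) - v (i + 1 + 1))
      = (u (i + 1 + 1) - u (i + 1)) * (v (i + 1 + 1) - v (i + 1)) := by ring
  rw [Nat.add_sub_cancel, hrate] at heq
  rw [Nat.add_sub_cancel, latticeBondForce, latticeBondForce, bondForce, bondForce]
  linear_combination heq

lemma lattice_power_balance (hv0 : v 0 = 0) (hvN : v (N + 1) = 0)
    (heq : ∀ j ∈ Icc 1 N,
      M * a j
        + c * ((u j - u (j - 1)) * Real.sign ((u j - u (j - 1)) * (v j - v (j - 1)))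
              + (u j - u (j + 1)) * Real.sign ((u j - u (j + 1)) * (v j - v (j + 1))))
        + k * ((u j - u (j - 1)) + (u j - u (j + 1)))
        + ε * ((u j - u (j - 1)) ^ 3 + (u j - u (j + 1)) ^ 3) = 0) :
    ∑ j ∈ Icc 1 N, M * v j * a j
        + ∑ j ∈ range (N + 1),
            (k * (u (j + 1) - u j) + ε * (u (j + 1) - u j) ^ 3) * (v (j + 1) - v j)
      = -(c * ∑ j ∈ range (N + 1), |(u (j + 1) - u j) * (v (j + 1) - v j)|) := by
  have hkinetic : ∑ j ∈ Icc 1 N, M * v j * a j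
      = -∑ j ∈ range (N + 1), latticeBondForce c k ε u v j * (v (j + 1) - v j) := by
    rw [sum_range_mul_sub_eq, hv0, hvN, mul_zero, mul_zero, add_zero, sub_zero,
      ← sum_neg_distrib]
    refine sum_congr rfl fun j hj => ?_
    linear_combination v j * mul_accel_eq_latticeBondForce_sub M c k ε u v a (mem_Icc.1 hj).1
      (heq j hj)
  calc _ = ∑ j ∈ range (N + 1),
          ((k * (u (j + 1) - u j) + ε * (u (j + 1) - u j) ^ 3) * (v (j + 1) - v j)
            - latticeBondForce c k ε u v j * (v (j + 1) - v j)) := by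
        rw [hkinetic, sum_sub_distrib]
        ring
    _ = ∑ j ∈ range (N + 1), -(c * |(u (j + 1) - u j) * (v (j + 1) - v j)|) :=
        sum_congr rfl fun j _ => by
          rw [latticeBondForce, bondForce_mul_rate]
          ring
    _ = _ := by rw [sum_neg_distrib, mul_sum]

end Lattice

theorem modelII_unforced_energy_nonincreasing_general
    (N : ℕ)
    (M c k ε : ℝ) (hc : 0 ≤ c)
    (x x' x'' : ℕ → ℝ → ℝ)
    (hx : ∀ j ∈ Icc 1 N, ∀ t, HasDerivAt (x j) (x' j t) t)
    (hx' : ∀ j ∈ Icc 1 N, ∀ t, HasDerivAt (x' j) (x'' j t) t)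
    (hb0 : ∀ t, x 0 t = 0) (hbN : ∀ t, x (N + 1) t = 0)
    (hb0' : ∀ t, x' 0 t = 0) (hbN' : ∀ t, x' (N + 1) t = 0)
    (heq : ∀ j ∈ Icc 1 N, ∀ t,
      M * x'' j t
        + c * ((x j t - x (j - 1) t)
                * Real.sign ((x j t - x (j - 1) t) * (x' j t - x' (j - 1) t))
              + (x j t - x (j + 1) t)
                * Real.sign ((x j t - x (j + 1) t) * (x' j t - x' (j + 1) t)))
        + k * ((x j t - x (j - 1) t) + (x j t - x (j + 1) t))
        + ε * ((x j t - x (j - 1) t) ^ 3 + (x j t - x (j + 1) t) ^ 3) = 0)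
    (E : ℝ → ℝ)
    (hE : ∀ t, E t
      = (∑ j ∈ Icc 1 N, M / 2 * (x' j t) ^ 2)
        + ∑ j ∈ range (N + 1),
            (k / 2 * (x (j + 1) t - x j t) ^ 2
              + ε / 4 * (x (j + 1) t - x j t) ^ 4)) :
    (∀ t, HasDerivAt E
      (-(c * ∑ j ∈ range (N + 1),
          |(x (j + 1) t - x j t) * (x' (j + 1) t - x' j t)|)) t) ∧
    (∀ t, -(c * ∑ j ∈ range (N + 1),
        |(x (j + 1) t - x j t) * (x' (j + 1) t - x' j t)|) ≤ 0) ∧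
    Antitone E := by
  have hxAll : ∀ j ≤ N + 1, ∀ t, HasDerivAt (x j) (x' j t) t := by
    intro j hj t
    rcases Nat.eq_zero_or_pos j with rfl | hj0
    · simpa [funext hb0, hb0'] using hasDerivAt_const t (0 : ℝ)
    rcases hj.eq_or_lt with rfl | hjN
    · simpa [funext hbN, hbN'] using hasDerivAt_const t (0 : ℝ)
    exact hx j (mem_Icc.2 ⟨hj0, by omega⟩) t
  have hE' : ∀ t, HasDerivAt E
      (-(c * ∑ j ∈ range (N + 1),
          |(x (j + 1) t - x j t) * (x' (j + 1) t - x' j t)|)) t := by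
    intro t
    rw [funext hE, ← lattice_power_balance N M c k ε (x · t) (x' · t) (x'' · t) (hb0' t) (hbN' t)
      fun j hj => heq j hj t]
    have hkinetic := HasDerivAt.fun_sum fun j hj => (hx' j hj t).const_mul_sq_div_two M
    have hpotential := HasDerivAt.fun_sum fun j (hj : j ∈ range (N + 1)) =>
      ((hxAll (j + 1) (by rw [mem_range] at hj; omega) t).sub
        (hxAll j (by rw [mem_range] at hj; omega) t)).bondPotential k ε
    exact hkinetic.add hpotential
  have hdiss : ∀ t, -(c * ∑ j ∈ range (N + 1),
      |(x (j + 1) t - x j t) * (x' (j + 1) t - x' j t)|) ≤ 0 :=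
    fun t => neg_nonpos.2 (mul_nonneg hc (sum_nonneg fun j _ => abs_nonneg _))
  exact ⟨hE', hdiss, antitone_of_hasDerivAt_nonpos hE' hdiss⟩

/-- For the unforced model II lattice of `N` oscillators with nearest-neighbor
dependent (non-local) hysteretic damping and fixed boundary conditions
`x₀ = x_{N+1} = 0` (and `ẋ₀ = ẋ_{N+1} = 0`), the total energy
`E(t) = Σ_{j=1}^{N} (M/2)·ẋ_j² + Σ_{j=0}^{N} [(k/2)·(x_{j+1}−x_j)² + (ε/4)·(x_{j+1}−x_j)⁴]`
is nonincreasing; indeed it is differentiable with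
`E'(t) = −c·Σ_{j=0}^{N} |(x_{j+1}−x_j)·(ẋ_{j+1}−ẋ_j)| ≤ 0`, i.e. each bond
dissipates energy at rate `c·|Δx·Δẋ|`. -/
theorem modelII_unforced_energy_nonincreasing
    (N : ℕ) (hN : 1 ≤ N)
    (M c k ε : ℝ) (hM : 0 < M) (hc : 0 ≤ c) (hk : 0 ≤ k) (hε : 0 ≤ ε)
    (x x' x'' : ℕ → ℝ → ℝ)
    (hx : ∀ j ∈ Icc 1 N, ∀ t, HasDerivAt (x j) (x' j t) t)
    (hx' : ∀ j ∈ Icc 1 N, ∀ t, HasDerivAt (x' j) (x'' j t) t)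
    (hb0 : ∀ t, x 0 t = 0) (hbN : ∀ t, x (N + 1) t = 0)
    (hb0' : ∀ t, x' 0 t = 0) (hbN' : ∀ t, x' (N + 1) t = 0)
    (heq : ∀ j ∈ Icc 1 N, ∀ t,
      M * x'' j t
        + c * ((x j t - x (j - 1) t)
                * Real.sign ((x j t - x (j - 1) t) * (x' j t - x' (j - 1) t))
              + (x j t - x (j + 1) t)
                * Real.sign ((x j t - x (j + 1) t) * (x' j t - x' (j + 1) t)))
        + k * ((x j t - x (j - 1) t) + (x j t - x (j + 1) t))
        + ε * ((x j t - x (j - 1) t) ^ 3 + (x j t - x (j + 1) t) ^ 3) = 0)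
    (E : ℝ → ℝ)
    (hE : ∀ t, E t
      = (∑ j ∈ Icc 1 N, M / 2 * (x' j t) ^ 2)
        + ∑ j ∈ range (N + 1),
            (k / 2 * (x (j + 1) t - x j t) ^ 2
              + ε / 4 * (x (j + 1) t - x j t) ^ 4)) :
    (∀ t, HasDerivAt E
      (-(c * ∑ j ∈ range (N + 1),
          |(x (j + 1) t - x j t) * (x' (j + 1) t - x' j t)|)) t) ∧
    (∀ t, -(c * ∑ j ∈ range (N + 1),
        |(x (j + 1) t - x j t) * (x' (j + 1) t - x' j t)|) ≤ 0) ∧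
    Antitone E :=
  modelII_unforced_energy_nonincreasing_general N M c k ε hc x x' x'' hx hx' hb0 hbN hb0' hbN' heq E
    hE
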